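/- Let Σ be an alphabet containing two distinct symbols a and b. The language (ab)* (the Dyck language over one pair of parentheses with nesting depth limited to 1) is not PTL-definable. -/

import Mathlib

/-- PTL formulas over alphabet `α`: atoms, conjunction, negation, and the past operator. -/
inductive PTL (α : Type*) : Type _
  | atom : α → PTL α
  | conj : PTL α → PTL α → PTL α
  | neg : PTL α → PTL α
  | past : PTL α → PTL α

/-- Satisfaction of a PTL formula in string `w` at (1-based) position `n ∈ {1,…,N+1}`. -/
def PTL.Sat {α : Type*} (w : List α) : PTL α → ℕ → Prop
  | .atom a, n => 1 ≤ n ∧ w[n - 1]? = some a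
  | .conj ψ₁ ψ₂, n => PTL.Sat w ψ₁ n ∧ PTL.Sat w ψ₂ n
  | .neg ψ, n => ¬ PTL.Sat w ψ n
  | .past ψ, n => ∃ m, 1 ≤ m ∧ m < n ∧ PTL.Sat w ψ m

/-- A string `w` of length `N` satisfies `ψ` iff `w, N+1 ⊨ ψ`. -/
def PTL.Models {α : Type*} (w : List α) (ψ : PTL α) : Prop :=
  PTL.Sat w ψ (w.length + 1)

/-- A language is PTL-definable if it is the set of strings satisfying some PTL formula. -/
def PTLDefinable {α : Type*} (L : Set (List α)) : Prop :=
  ∃ ψ : PTL α, ∀ w : List α, w ∈ L ↔ PTL.Models w ψ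

/-- `listPow w k` is the `k`-fold concatenation `w^k`. -/
def listPow {α : Type*} (w : List α) : ℕ → List α
  | 0 => []
  | k + 1 => w ++ listPow w k

/-!
PTL has only a strict past operator, so it cannot count modulo 2. In a word of period `p`,
a formula of past-depth `d` cannot tell position `m` from position `m + p` once `m > p d`:
a past witness in the last period before `m + p` can be moved one period back. Hence
`(ab)ⁿ` and `(ab)ⁿ a` agree on every formula `P φ` with `φ` of depth `< n` (the extra final
`a` looks like the `a` two letters earlier), so they satisfy the same formulas of depth `≤ n`,
although only the second has odd length.
-/

namespace PTL

variable {α : Type*}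

def depth : PTL α → ℕ
  | .atom _ => 0
  | .conj ψ₁ ψ₂ => max ψ₁.depth ψ₂.depth
  | .neg ψ => ψ.depth
  | .past ψ => ψ.depth + 1

theorem models_past_iff {w : List α} {φ : PTL α} :
    Models w φ.past ↔ ∃ m, 1 ≤ m ∧ m ≤ w.length ∧ Sat w φ m := by
  simp only [Models, Sat, Nat.lt_succ_iff]

theorem sat_append_iff {u v : List α} :
    ∀ (φ : PTL α) {m : ℕ}, m ≤ u.length → (Sat (u ++ v) φ m ↔ Sat u φ m)
  | .atom c, m, hm => and_congr_right fun h1 => by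
      rw [List.getElem?_append_left (by omega)]
  | .conj p q, m, hm => and_congr (sat_append_iff p hm) (sat_append_iff q hm)
  | .neg p, m, hm => not_congr (sat_append_iff p hm)
  | .past p, m, hm => exists_congr fun k => and_congr_right fun _ =>
      and_congr_right fun hk => sat_append_iff p (by omega)

theorem sat_add_period_iff {w : List α} {p : ℕ}
    (hw : ∀ i, i + p < w.length → w[i]? = w[i + p]?) :
    ∀ (φ : PTL α) {m : ℕ}, p * φ.depth < m → m + p ≤ w.length →
      (Sat w φ (m + p) ↔ Sat w φ m)
  | .atom c, m, hm, hmw => by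
      simp only [depth, mul_zero] at hm
      have hidx : m + p - 1 = m - 1 + p := by omega
      have hletter := hw (m - 1) (by omega)
      simp only [Sat, hidx, ← hletter]
      exact and_congr_left fun _ => by omega
  | .conj φ ψ, m, hm, hmw => by
      simp only [depth] at hm
      exact and_congr
        (sat_add_period_iff hw φ ((Nat.mul_le_mul_left p (le_max_left ..)).trans_lt hm) hmw)
        (sat_add_period_iff hw ψ ((Nat.mul_le_mul_left p (le_max_right ..)).trans_lt hm) hmw)
  | .neg φ, m, hm, hmw => not_congr (sat_add_period_iff hw φ hm hmw)
  | .past φ, m, hm, hmw => by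
      simp only [depth, mul_add, mul_one] at hm
      constructor
      · rintro ⟨k, hk1, hkm, hk⟩
        by_cases hkm' : k < m
        · exact ⟨k, hk1, hkm', hk⟩
        obtain ⟨j, rfl⟩ : ∃ j, k = j + p := ⟨k - p, by omega⟩
        exact ⟨j, by omega, by omega, (sat_add_period_iff hw φ (by omega) (by omega)).1 hk⟩
      · rintro ⟨k, hk1, hkm, hk⟩
        exact ⟨k, hk1, by omega, hk⟩

theorem models_iff_of_models_past_iff {u v : List α} {d : ℕ}
    (h : ∀ φ : PTL α, φ.depth < d → (Models u φ.past ↔ Models v φ.past)) :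
    ∀ ψ : PTL α, ψ.depth ≤ d → (Models u ψ ↔ Models v ψ)
  | .atom c, _ => by simp [Models, Sat]
  | .conj φ ψ, hd => and_congr
      (models_iff_of_models_past_iff h φ (le_trans (le_max_left ..) hd))
      (models_iff_of_models_past_iff h ψ (le_trans (le_max_right ..) hd))
  | .neg φ, hd => not_congr (models_iff_of_models_past_iff h φ hd)
  | .past φ, hd => h φ hd

end PTL

section listPow

variable {α : Type*}

theorem length_listPow (w : List α) (k : ℕ) : (listPow w k).length = k * w.length := by
  induction k with
  | zero => simp [listPow]
  | succ k ih => simp only [listPow, List.length_append, ih]; ring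

theorem getElem?_listPow_append (a b : α) :
    ∀ (n : ℕ) {i : ℕ}, i ≤ 2 * n →
      (listPow [a, b] n ++ [a])[i]? = some (if i % 2 = 0 then a else b)
  | 0, 0, _ => rfl
  | n + 1, 0, _ => rfl
  | n + 1, 1, _ => rfl
  | n + 1, i + 2, hi => by
      simp only [listPow, List.cons_append, List.nil_append, List.getElem?_cons_succ,
        Nat.add_mod_right]
      exact getElem?_listPow_append a b n (by omega)

theorem models_listPow_iff_models_listPow_append {a b : α} {n : ℕ} {ψ : PTL α}
    (hψ : ψ.depth ≤ n) :
    PTL.Models (listPow [a, b] n) ψ ↔ PTL.Models (listPow [a, b] n ++ [a]) ψ := by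
  have hlen : (listPow [a, b] n).length = 2 * n := by simp [length_listPow, mul_comm]
  have hlen' : (listPow [a, b] n ++ [a]).length = 2 * n + 1 := by simp [hlen]
  have hperiod : ∀ i, i + 2 < (listPow [a, b] n ++ [a]).length →
      (listPow [a, b] n ++ [a])[i]? = (listPow [a, b] n ++ [a])[i + 2]? := by
    intro i hi
    rw [hlen'] at hi
    rw [getElem?_listPow_append a b n (by omega), getElem?_listPow_append a b n (by omega),
      Nat.add_mod_right]
  refine PTL.models_iff_of_models_past_iff (fun φ hφ => ?_) ψ hψ
  simp only [PTL.models_past_iff, hlen, hlen']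
  constructor
  · rintro ⟨m, hm1, hm, h⟩
    exact ⟨m, hm1, by omega, (PTL.sat_append_iff φ (by omega)).2 h⟩
  · rintro ⟨m, hm1, hm, h⟩
    rcases Nat.lt_or_ge m (2 * n + 1) with hm' | hm'
    · exact ⟨m, hm1, by omega, (PTL.sat_append_iff φ (by omega)).1 h⟩
    obtain rfl : m = 2 * n - 1 + 2 := by omega
    have h' := (PTL.sat_add_period_iff hperiod φ (by omega) (by omega)).1 h
    exact ⟨2 * n - 1, by omega, by omega, (PTL.sat_append_iff φ (by omega)).1 h'⟩

end listPow

theorem dyck11_not_ptl_general {α : Type*} (a b : α) :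
    ¬ PTLDefinable {w : List α | ∃ k : ℕ, w = listPow [a, b] k} := by
  rintro ⟨ψ, hψ⟩
  have hmem := (hψ (listPow [a, b] ψ.depth)).1 ⟨_, rfl⟩
  obtain ⟨k, hk⟩ := (hψ _).2 ((models_listPow_iff_models_listPow_append le_rfl).1 hmem)
  have hlen := congrArg List.length hk
  simp only [List.length_append, length_listPow, List.length_cons, List.length_nil] at hlen
  omega

/-- The language `(ab)*` is not PTL-definable. -/
theorem dyck11_not_ptl {α : Type*} [Fintype α] (a b : α) (hab : a ≠ b) :
    ¬ PTLDefinable {w : List α | ∃ k : ℕ, w = listPow [a, b] k} :=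
  dyck11_not_ptl_general a b
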